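/- arXiv:2004.06467 — 2 statements merged into one kernel-verified Lean document; each statement's English description precedes it below -/
import Mathlib

section
/- Let k ≥ 1 be an integer and let F_k(x, λ²) denote the CDF of the noncentral chi-square distribution with k degrees of freedom and noncentrality parameter λ², i.e., the CDF of |Z + λ e₁|² where Z is a standard Gaussian vector in ℝ^k and e₁ is the first standard basis vector. Then for all x ∈ ℝ and all λ₁, λ₂ ≥ 0: | F_k(x, λ₁²) − F_k(x, λ₂²) | ≤ 2 · sup_{y ∈ ℝ} φ(y) · |λ₁ − λ₂| = √(2/π) · |λ₁ − λ₂|, where φ is the standard normal density. -/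
open MeasureTheory ProbabilityTheory Filter Set
open scoped ENNReal NNReal Classical

/-- Standard normal CDF. -/
noncomputable def stdPhi (x : ℝ) : ℝ := (gaussianReal 0 1 (Set.Iic x)).toReal

/-- Standard normal density. -/
noncomputable def stdphi (x : ℝ) : ℝ := (Real.sqrt (2 * Real.pi))⁻¹ * Real.exp (-(x ^ 2) / 2)

/-- The law with CDF `(1-ρn) Φ(x/θ₀) + ρn H(x)` where `μH` has CDF `H`. -/
noncomputable def mixLaw (θ₀ : ℝ) (μH : Measure ℝ) (ρn : ℝ) : Measure ℝ :=
  ENNReal.ofReal (1 - ρn) • gaussianReal 0 ⟨θ₀ ^ 2, sq_nonneg θ₀⟩ + ENNReal.ofReal ρn • μH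

/-- Bernoulli law on `ℝ` with success probability `q`. -/
noncomputable def berLaw (q : ℝ) : Measure ℝ :=
  ENNReal.ofReal q • Measure.dirac (1 : ℝ) + ENNReal.ofReal (1 - q) • Measure.dirac (0 : ℝ)

/-- The shift `Δ₀(x, Π) = Σ_{j=0}^p (E Φ((x + β_j ξ)/θ₀) − Φ(x/θ₀))`, `β₀ = −1`. -/
noncomputable def Delta0 {p : ℕ} (β : Fin p → ℝ) (θ₀ : ℝ) (PiM : Measure ℝ) (x : ℝ) : ℝ :=
  ((∫ u, stdPhi ((x + (-1) * u) / θ₀) ∂PiM) - stdPhi (x / θ₀)) +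
    ∑ j : Fin p, ((∫ u, stdPhi ((x + β j * u) / θ₀) ∂PiM) - stdPhi (x / θ₀))

/-- Symmetrized shift `Δ_S(x, Π)`. -/
noncomputable def DeltaS {p : ℕ} (β : Fin p → ℝ) (θ₀ : ℝ) (PiM : Measure ℝ) (x : ℝ) : ℝ :=
  (Delta0 β θ₀ PiM x - Delta0 β θ₀ PiM (-x)) / 2

/-- Empirical distribution function of `w 1, …, w n`. -/
noncomputable def edf (w : ℤ → ℝ) (n : ℕ) (x : ℝ) : ℝ :=
  (n : ℝ)⁻¹ * ∑ t ∈ Finset.Icc (1 : ℤ) (n : ℤ), if w t ≤ x then (1 : ℝ) else 0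

/-- Indicator of the symmetric cell `B_j⁺ ∪ B_j⁻` (cells indexed `1,…,m`; `x_m = ∞`). -/
noncomputable def indB (m : ℕ) (xpt : ℕ → ℝ) (j : ℕ) (u : ℝ) : ℝ :=
  if j < m then
    if (xpt (j - 1) < u ∧ u ≤ xpt j) ∨ (-(xpt j) < u ∧ u ≤ -(xpt (j - 1))) then 1 else 0
  else if (xpt (m - 1) < u ∨ u ≤ -(xpt (m - 1))) then 1 else 0

/-- `2(F(x_j) − F(x_{j−1}))` for a CDF `F`, with `x_m = ∞`. -/
noncomputable def cellProb (m : ℕ) (xpt : ℕ → ℝ) (F : ℝ → ℝ) (j : ℕ) : ℝ :=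
  if j < m then 2 * (F (xpt j) - F (xpt (j - 1))) else 2 * (1 - F (xpt (m - 1)))

/-- `p_j(θ) = 2(Φ(x_j/θ) − Φ(x_{j−1}/θ))`. -/
noncomputable def pcell (m : ℕ) (xpt : ℕ → ℝ) (θ : ℝ) (j : ℕ) : ℝ :=
  cellProb m xpt (fun x => stdPhi (x / θ)) j

/-- `p_j'(θ)`, the derivative of `p_j(θ)` in `θ`. -/
noncomputable def pcell' (m : ℕ) (xpt : ℕ → ℝ) (θ : ℝ) (j : ℕ) : ℝ :=
  if j < m then
    2 * (stdphi (xpt j / θ) * (-(xpt j) / θ ^ 2) -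
      stdphi (xpt (j - 1) / θ) * (-(xpt (j - 1)) / θ ^ 2))
  else 2 * (stdphi (xpt (m - 1) / θ) * (xpt (m - 1) / θ ^ 2))

/-- `δ_j(Π) = 2[Δ_S(x_j, Π) − Δ_S(x_{j−1}, Π)]`, with `Δ_S(x_m, Π) = Δ_S(∞, Π) = 0`. -/
noncomputable def deltaCell {p : ℕ} (β : Fin p → ℝ) (θ₀ : ℝ) (m : ℕ) (xpt : ℕ → ℝ)
    (PiM : Measure ℝ) (j : ℕ) : ℝ :=
  if j < m then 2 * (DeltaS β θ₀ PiM (xpt j) - DeltaS β θ₀ PiM (xpt (j - 1)))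
  else 2 * (0 - DeltaS β θ₀ PiM (xpt (m - 1)))

/-- Euclidean norm of the vector `δ(Π)`. -/
noncomputable def deltaNorm {p : ℕ} (β : Fin p → ℝ) (θ₀ : ℝ) (m : ℕ) (xpt : ℕ → ℝ)
    (PiM : Measure ℝ) : ℝ :=
  Real.sqrt (∑ j ∈ Finset.Icc 1 m, (deltaCell β θ₀ m xpt PiM j) ^ 2)

/-- Number of `w t`, `1 ≤ t ≤ n`, in `B_j⁺ ∪ B_j⁻` (as a real number). -/
noncomputable def cellCount (m : ℕ) (xpt : ℕ → ℝ) (w : ℤ → ℝ) (n : ℕ) (j : ℕ) : ℝ :=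
  ∑ t ∈ Finset.Icc (1 : ℤ) (n : ℤ), indB m xpt j (w t)

/-- CDF of the noncentral chi-square law with `k` degrees of freedom and
noncentrality `lam²`: the law of `|Z + lam·e₁|²` for `Z` standard Gaussian in `ℝ^k`. -/
noncomputable def ncChiSqCDF (k : ℕ) (lam : ℝ) (x : ℝ) : ℝ :=
  ((Measure.pi fun _ : Fin k => gaussianReal 0 1)
    {zv | (∑ j, (zv j + if (j : ℕ) = 0 then lam else 0) ^ 2) ≤ x}).toReal

/-- Noncentrality parameter `|(E_m − α₀α₀ᵀ) P₀^{−1/2} w|²`. -/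
noncomputable def lamSq (m : ℕ) (xpt : ℕ → ℝ) (θ₀ : ℝ) (w : ℕ → ℝ) : ℝ :=
  let b : ℕ → ℝ := fun j => pcell' m xpt θ₀ j / Real.sqrt (pcell m xpt θ₀ j)
  let a : ℕ → ℝ := fun j => b j / Real.sqrt (∑ l ∈ Finset.Icc 1 m, b l ^ 2)
  let u : ℕ → ℝ := fun j => w j / Real.sqrt (pcell m xpt θ₀ j)
  ∑ j ∈ Finset.Icc 1 m, (u j - (∑ i ∈ Finset.Icc 1 m, a i * u i) * a j) ^ 2

/-- The component `(α₀)_j = (b₀/|b₀|)_j` (cells indexed `1,…,m`). -/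
noncomputable def alpha0 (m : ℕ) (xpt : ℕ → ℝ) (θ₀ : ℝ) (j : ℕ) : ℝ :=
  (pcell' m xpt θ₀ j / Real.sqrt (pcell m xpt θ₀ j)) /
    Real.sqrt (∑ l ∈ Finset.Icc 1 m, (pcell' m xpt θ₀ l / Real.sqrt (pcell m xpt θ₀ l)) ^ 2)

/-- The matrix `(E_m − α₀α₀ᵀ) P₀^{−1/2}`. -/
noncomputable def projMat (m : ℕ) (xpt : ℕ → ℝ) (θ₀ : ℝ) : Matrix (Fin m) (Fin m) ℝ :=
  Matrix.of fun i j =>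
    ((if i = j then (1 : ℝ) else 0) - alpha0 m xpt θ₀ ((i : ℕ) + 1) * alpha0 m xpt θ₀ ((j : ℕ) + 1)) *
      (Real.sqrt (pcell m xpt θ₀ ((j : ℕ) + 1)))⁻¹

/-- Euclidean operator norm of `(E_m − α₀α₀ᵀ) P₀^{−1/2}`. -/
noncomputable def projMatNorm (m : ℕ) (xpt : ℕ → ℝ) (θ₀ : ℝ) : ℝ :=
  ‖LinearMap.toContinuousLinearMap (Matrix.toEuclideanLin (projMat m xpt θ₀))‖

/-! Write `Z = (a, g)` with `a` the first coordinate. For fixed `g`, the event `|Z + λ e₁|² ≤ x`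
is `a ∈ [-s - λ, s - λ]` with `s = √(x - |g|²)`, an interval of fixed length translated by `-λ`.
Changing `λ₁` to `λ₂` moves each endpoint by `|λ₁ - λ₂|`, so the probability of the slice changes
by at most `2 · sup φ · |λ₁ - λ₂|`; integrating over `g` gives the bound. -/

def ncChiSqSet (k : ℕ) (lam x : ℝ) : Set (Fin k → ℝ) :=
  {zv | (∑ j, (zv j + if (j : ℕ) = 0 then lam else 0) ^ 2) ≤ x}

lemma ncChiSqCDF_eq_measure (k : ℕ) (lam x : ℝ) :
    ncChiSqCDF k lam x =
      ((Measure.pi fun _ : Fin k => gaussianReal 0 1) (ncChiSqSet k lam x)).toReal :=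
  rfl

lemma gaussianPDFReal_le (μ : ℝ) (v : ℝ≥0) (y : ℝ) :
    gaussianPDFReal μ v y ≤ (Real.sqrt (2 * Real.pi * v))⁻¹ := by
  rw [gaussianPDFReal_def]
  refine mul_le_of_le_one_right (by positivity) (Real.exp_le_one_iff.2 ?_)
  exact div_nonpos_of_nonpos_of_nonneg (neg_nonpos.2 (sq_nonneg _)) (by positivity)

lemma gaussianReal_le_mul_volume (μ : ℝ) {v : ℝ≥0} (hv : v ≠ 0) (s : Set ℝ) :
    gaussianReal μ v s ≤ ENNReal.ofReal (Real.sqrt (2 * Real.pi * v))⁻¹ * volume s := by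
  rw [gaussianReal_apply μ hv s, ← setLIntegral_const]
  exact lintegral_mono fun y => ENNReal.ofReal_le_ofReal (gaussianPDFReal_le μ v y)

section BoundedDensity

variable {μ : Measure ℝ} {c : ℝ≥0∞}

lemma measure_Icc_le_add_of_le_mul_volume (hμ : ∀ s, μ s ≤ c * volume s) (a b a' b' : ℝ) :
    μ (Icc a b) ≤ μ (Icc a' b') + (c * ENNReal.ofReal |a' - a| + c * ENNReal.ofReal |b - b'|) := by
  have hsub : Icc a b ⊆ Icc a' b' ∪ (uIcc a a' ∪ uIcc b' b) := by
    rintro y ⟨hay, hyb⟩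
    by_cases hya' : y < a'
    · exact Or.inr (Or.inl (Set.mem_uIcc.2 (Or.inl ⟨hay, hya'.le⟩)))
    by_cases hb'y : b' < y
    · exact Or.inr (Or.inr (Set.mem_uIcc.2 (Or.inl ⟨hb'y.le, hyb⟩)))
    exact Or.inl ⟨not_lt.1 hya', not_lt.1 hb'y⟩
  calc μ (Icc a b) ≤ μ (Icc a' b') + (μ (uIcc a a') + μ (uIcc b' b)) :=
        (measure_mono hsub).trans <|
          (measure_union_le _ _).trans (add_le_add le_rfl (measure_union_le _ _))
    _ ≤ μ (Icc a' b') + (c * volume (uIcc a a') + c * volume (uIcc b' b)) := by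
        gcongr <;> exact hμ _
    _ = _ := by rw [Real.volume_interval, Real.volume_interval]

lemma setOf_add_sq_le_eq_Icc {r : ℝ} (hr : 0 ≤ r) (l : ℝ) :
    {a : ℝ | (a + l) ^ 2 ≤ r} = Icc (-Real.sqrt r - l) (Real.sqrt r - l) := by
  ext a
  simp only [Set.mem_ofPred_eq, Set.mem_Icc, Real.sq_le hr]
  constructor <;> rintro ⟨h, h'⟩ <;> constructor <;> linarith

lemma measure_setOf_add_sq_le_le (hμ : ∀ s, μ s ≤ c * volume s) (r l₁ l₂ : ℝ) :
    μ {a : ℝ | (a + l₁) ^ 2 ≤ r} ≤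
      μ {a : ℝ | (a + l₂) ^ 2 ≤ r} + 2 * c * ENNReal.ofReal |l₁ - l₂| := by
  rcases lt_or_ge r 0 with hr | hr
  · have hempty : {a : ℝ | (a + l₁) ^ 2 ≤ r} = ∅ :=
      Set.eq_empty_of_forall_notMem fun a ha => (sq_nonneg (a + l₁)).not_gt (ha.trans_lt hr)
    simp [hempty]
  rw [setOf_add_sq_le_eq_Icc hr, setOf_add_sq_le_eq_Icc hr]
  refine (measure_Icc_le_add_of_le_mul_volume hμ _ _ (-Real.sqrt r - l₂)
    (Real.sqrt r - l₂)).trans_eq ?_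
  rw [show -Real.sqrt r - l₂ - (-Real.sqrt r - l₁) = l₁ - l₂ by ring,
    show Real.sqrt r - l₁ - (Real.sqrt r - l₂) = -(l₁ - l₂) by ring, abs_neg, two_mul, add_mul]

lemma measure_ncChiSqSet_succ [SigmaFinite μ] (n : ℕ) (lam x : ℝ) :
    Measure.pi (fun _ : Fin (n + 1) => μ) (ncChiSqSet (n + 1) lam x) =
      ∫⁻ g : Fin n → ℝ, μ {a : ℝ | (a + lam) ^ 2 ≤ x - ∑ j, g j ^ 2}
        ∂Measure.pi fun _ : Fin n => μ := by
  set T : Set (ℝ × (Fin n → ℝ)) := {p | (p.1 + lam) ^ 2 + ∑ j, p.2 j ^ 2 ≤ x}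
  have hT : MeasurableSet T := by
    refine measurableSet_le ?_ measurable_const
    exact ((measurable_fst.add_const lam).pow_const 2).add
      (Finset.measurable_sum _ fun j _ => ((measurable_pi_apply j).comp measurable_snd).pow_const 2)
  have hpre : MeasurableEquiv.piFinSuccAbove (fun _ : Fin (n + 1) => ℝ) 0 ⁻¹' T =
      ncChiSqSet (n + 1) lam x := by
    ext z
    simp only [ncChiSqSet, T, Set.mem_preimage, MeasurableEquiv.piFinSuccAbove_apply,
      Fin.insertNthEquiv, Equiv.coe_fn_symm_mk, Fin.removeNth, Set.mem_ofPred_eq,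
      Fin.sum_univ_succ]
    simp [Fin.succAbove]
  rw [← hpre, (measurePreserving_piFinSuccAbove (fun _ => μ) 0).measure_preimage
    hT.nullMeasurableSet, Measure.prod_apply_symm hT]
  refine lintegral_congr fun g => congrArg μ (Set.ext fun a => ?_)
  simp only [T, Set.mem_preimage, Set.mem_ofPred_eq, le_sub_iff_add_le]

lemma measure_ncChiSqSet_le [IsProbabilityMeasure μ] (hμ : ∀ s, μ s ≤ c * volume s)
    (n : ℕ) (x l₁ l₂ : ℝ) :
    Measure.pi (fun _ : Fin (n + 1) => μ) (ncChiSqSet (n + 1) l₁ x) ≤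
      Measure.pi (fun _ : Fin (n + 1) => μ) (ncChiSqSet (n + 1) l₂ x) +
        2 * c * ENNReal.ofReal |l₁ - l₂| := by
  rw [measure_ncChiSqSet_succ, measure_ncChiSqSet_succ]
  calc _ ≤ ∫⁻ g : Fin n → ℝ, (μ {a : ℝ | (a + l₂) ^ 2 ≤ x - ∑ j, g j ^ 2} +
          2 * c * ENNReal.ofReal |l₁ - l₂|) ∂Measure.pi fun _ : Fin n => μ :=
        lintegral_mono fun g => measure_setOf_add_sq_le_le hμ _ l₁ l₂
    _ = _ := by rw [lintegral_add_right _ measurable_const, lintegral_const, measure_univ, mul_one]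

end BoundedDensity

lemma ncChiSqCDF_le_add (n : ℕ) (x l₁ l₂ : ℝ) :
    ncChiSqCDF (n + 1) l₁ x ≤
      ncChiSqCDF (n + 1) l₂ x + 2 * (Real.sqrt (2 * Real.pi))⁻¹ * |l₁ - l₂| := by
  have hγ : ∀ s, gaussianReal 0 1 s ≤ ENNReal.ofReal (Real.sqrt (2 * Real.pi))⁻¹ * volume s := by
    simpa using gaussianReal_le_mul_volume 0 one_ne_zero
  have h := measure_ncChiSqSet_le hγ n x l₁ l₂
  rw [← ENNReal.ofReal_ofNat 2, ← ENNReal.ofReal_mul zero_le_two,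
    ← ENNReal.ofReal_mul (by positivity)] at h
  rw [ncChiSqCDF_eq_measure, ncChiSqCDF_eq_measure]
  refine (ENNReal.toReal_mono (by finiteness) h).trans_eq ?_
  rw [ENNReal.toReal_add (measure_ne_top _ _) ENNReal.ofReal_ne_top,
    ENNReal.toReal_ofReal (by positivity)]

lemma abs_ncChiSqCDF_sub_le (n : ℕ) (x l₁ l₂ : ℝ) :
    |ncChiSqCDF (n + 1) l₁ x - ncChiSqCDF (n + 1) l₂ x| ≤
      2 * (Real.sqrt (2 * Real.pi))⁻¹ * |l₁ - l₂| := by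
  have h₂₁ := ncChiSqCDF_le_add n x l₂ l₁
  rw [abs_sub_comm] at h₂₁
  exact abs_sub_le_iff.2 ⟨by linarith [ncChiSqCDF_le_add n x l₁ l₂], by linarith⟩

lemma stdphi_le_stdphi_zero (y : ℝ) : stdphi y ≤ stdphi 0 := by
  simpa [stdphi, gaussianPDFReal_def] using gaussianPDFReal_le 0 1 y

lemma iSup_stdphi : ⨆ y : ℝ, stdphi y = (Real.sqrt (2 * Real.pi))⁻¹ := by
  have h0 : stdphi 0 = (Real.sqrt (2 * Real.pi))⁻¹ := by simp [stdphi]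
  rw [← h0]
  exact le_antisymm (ciSup_le stdphi_le_stdphi_zero)
    (le_ciSup ⟨stdphi 0, Set.forall_mem_range.2 stdphi_le_stdphi_zero⟩ 0)

lemma two_mul_inv_sqrt_two_mul_pi : 2 * (Real.sqrt (2 * Real.pi))⁻¹ = Real.sqrt (2 / Real.pi) := by
  rw [Real.sqrt_div zero_le_two, Real.sqrt_mul zero_le_two]
  field_simp
  exact (Real.sq_sqrt zero_le_two).symm

theorem ncChiSqCDF_lipschitz_general (k : ℕ) (hk : 1 ≤ k) (x : ℝ) (l₁ l₂ : ℝ) :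
    |ncChiSqCDF k l₁ x - ncChiSqCDF k l₂ x| ≤ 2 * (⨆ y : ℝ, stdphi y) * |l₁ - l₂| ∧
      2 * (⨆ y : ℝ, stdphi y) * |l₁ - l₂| = Real.sqrt (2 / Real.pi) * |l₁ - l₂| := by
  obtain ⟨n, rfl⟩ : ∃ n, k = n + 1 := ⟨k - 1, by omega⟩
  rw [iSup_stdphi]
  exact ⟨abs_ncChiSqCDF_sub_le n x l₁ l₂, by rw [two_mul_inv_sqrt_two_mul_pi]⟩

/-- **Lipschitz bound for the noncentral chi-square CDF.** For `k ≥ 1`, `x ∈ ℝ` and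
`λ₁, λ₂ ≥ 0`, `|F_k(x, λ₁²) − F_k(x, λ₂²)| ≤ 2 sup_y φ(y) · |λ₁ − λ₂| = √(2/π)·|λ₁ − λ₂|`. -/
theorem ncChiSqCDF_lipschitz (k : ℕ) (hk : 1 ≤ k) (x : ℝ) (l₁ l₂ : ℝ)
    (h₁ : 0 ≤ l₁) (h₂ : 0 ≤ l₂) :
    |ncChiSqCDF k l₁ x - ncChiSqCDF k l₂ x| ≤ 2 * (⨆ y : ℝ, stdphi y) * |l₁ - l₂| ∧
      2 * (⨆ y : ℝ, stdphi y) * |l₁ - l₂| = Real.sqrt (2 / Real.pi) * |l₁ - l₂| :=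
  ncChiSqCDF_lipschitz_general k hk x l₁ l₂
end

section
/- (Qualitative robustness, (2.16)) For every γ ≥ 0: sup over all probability distributions Π on ℝ and all ρ ≥ 0 of | W(ρ, γ, Π) − W(ρ, 0, Π) | is at most γ · √(2/π) · ‖(E_m − α₀ α₀ᵀ) P₀^{−1/2}‖ · sup_Π |δ(Π)|, which is finite and tends to 0 as γ → 0; in particular the limiting power W(ρ, γ, Π) is uniformly (in Π and ρ) equicontinuous in γ at γ = 0. -/
open MeasureTheory ProbabilityTheory Filter Set
open scoped ENNReal NNReal Classical

/-!
Changing `γ` moves the vector `w = ρ (p_H − p₀) + γ δ(Π)` by `γ δ(Π)`, so `λ̂ = |L w|`, with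
`L = (E_m − α₀α₀ᵀ) P₀^{−1/2}`, moves by at most `γ ‖L‖ |δ(Π)|`. The noncentral chi-square CDF is
`√(2/π)`-Lipschitz in `λ`: after integrating out all coordinates but the first, one compares the
standard normal masses of two intervals of equal length whose centres are `|λ − λ'|` apart, and
the normal density is at most `1/√(2π)`. Finally `|δ(Π)|` is bounded uniformly in `Π` because `Φ`
takes values in `[0, 1]`.
-/

lemma sqrt_two_div_pi_eq : Real.sqrt (2 / Real.pi) = 2 * (Real.sqrt (2 * Real.pi))⁻¹ := by
  have h2 : Real.sqrt 2 * Real.sqrt 2 = 2 := Real.mul_self_sqrt zero_le_two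
  have hπ : Real.sqrt Real.pi ≠ 0 := Real.sqrt_ne_zero'.2 Real.pi_pos
  rw [Real.sqrt_div zero_le_two, Real.sqrt_mul zero_le_two]
  field_simp
  linarith

lemma gaussianPDF_zero_one_le (x : ℝ) :
    gaussianPDF 0 1 x ≤ ENNReal.ofReal (Real.sqrt (2 * Real.pi))⁻¹ := by
  refine ENNReal.ofReal_le_ofReal ?_
  rw [gaussianPDFReal, NNReal.coe_one, mul_one]
  refine mul_le_of_le_one_right (by positivity) (Real.exp_le_one_iff.2 ?_)
  have := sq_nonneg (x - 0)
  linarith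

lemma gaussianReal_Icc_le (u v : ℝ) :
    gaussianReal 0 1 (Set.Icc u v) ≤ ENNReal.ofReal ((v - u) * (Real.sqrt (2 * Real.pi))⁻¹) :=
  calc gaussianReal 0 1 (Set.Icc u v)
      = ∫⁻ x in Set.Icc u v, gaussianPDF 0 1 x := gaussianReal_apply 0 one_ne_zero _
    _ ≤ ∫⁻ _ in Set.Icc u v, ENNReal.ofReal (Real.sqrt (2 * Real.pi))⁻¹ :=
        lintegral_mono gaussianPDF_zero_one_le
    _ = ENNReal.ofReal ((v - u) * (Real.sqrt (2 * Real.pi))⁻¹) := by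
        rw [setLIntegral_const, Real.volume_Icc, ← ENNReal.ofReal_mul (by positivity), mul_comm]

lemma measure_closedBall_le_of_measure_Icc_le (μ : Measure ℝ) {M : ℝ} (hM : 0 ≤ M)
    (hμ : ∀ u v, μ (Set.Icc u v) ≤ ENNReal.ofReal ((v - u) * M)) (a b r : ℝ) :
    μ (Metric.closedBall a r) ≤ μ (Metric.closedBall b r) + ENNReal.ofReal (2 * M * |a - b|) := by
  have hcover : Metric.closedBall a r ⊆
      Metric.closedBall b r ∪ (Set.Icc (a - r) (b - r) ∪ Set.Icc (b + r) (a + r)) := by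
    simp only [Real.closedBall_eq_Icc]
    intro z ⟨hza, hzb⟩
    by_cases hlo : b - r ≤ z
    · by_cases hhi : z ≤ b + r
      · exact Or.inl ⟨hlo, hhi⟩
      · exact Or.inr (Or.inr ⟨by linarith, hzb⟩)
    · exact Or.inr (Or.inl ⟨hza, by linarith⟩)
  have hsides : μ (Set.Icc (a - r) (b - r)) + μ (Set.Icc (b + r) (a + r)) ≤
      ENNReal.ofReal (2 * M * |a - b|) := by
    calc μ (Set.Icc (a - r) (b - r)) + μ (Set.Icc (b + r) (a + r))
        ≤ ENNReal.ofReal (|a - b| * M) + ENNReal.ofReal (|a - b| * M) := by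
          gcongr
          · refine (hμ _ _).trans (ENNReal.ofReal_le_ofReal ?_)
            have := neg_abs_le (a - b)
            nlinarith
          · refine (hμ _ _).trans (ENNReal.ofReal_le_ofReal ?_)
            have := le_abs_self (a - b)
            nlinarith
      _ = ENNReal.ofReal (2 * M * |a - b|) := by
          rw [← ENNReal.ofReal_add (by positivity) (by positivity)]
          ring_nf
  calc μ (Metric.closedBall a r)
      ≤ μ (Metric.closedBall b r) +
          (μ (Set.Icc (a - r) (b - r)) + μ (Set.Icc (b + r) (a + r))) :=
        (measure_mono hcover).trans
          ((measure_union_le _ _).trans (add_le_add le_rfl (measure_union_le _ _)))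
    _ ≤ μ (Metric.closedBall b r) + ENNReal.ofReal (2 * M * |a - b|) := by gcongr

lemma setOf_sq_add_le_eq_closedBall {c : ℝ} (hc : 0 ≤ c) (a : ℝ) :
    {z : ℝ | (z + a) ^ 2 ≤ c} = Metric.closedBall (-a) (Real.sqrt c) := by
  ext z
  rw [Set.mem_ofPred_eq, Metric.mem_closedBall, Real.dist_eq, sub_neg_eq_add,
    Real.le_sqrt (abs_nonneg _) hc, sq_abs]

lemma gaussianReal_setOf_sq_add_le (a b c : ℝ) :
    gaussianReal 0 1 {z : ℝ | (z + a) ^ 2 ≤ c} ≤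
      gaussianReal 0 1 {z : ℝ | (z + b) ^ 2 ≤ c} +
        ENNReal.ofReal (Real.sqrt (2 / Real.pi) * |a - b|) := by
  rcases lt_or_ge c 0 with hc | hc
  · have hempty : {z : ℝ | (z + a) ^ 2 ≤ c} = ∅ :=
      Set.eq_empty_of_forall_notMem fun z hz => (sq_nonneg (z + a)).not_gt (hz.trans_lt hc)
    simp [hempty]
  · rw [setOf_sq_add_le_eq_closedBall hc, setOf_sq_add_le_eq_closedBall hc, sqrt_two_div_pi_eq]
    refine (measure_closedBall_le_of_measure_Icc_le _ (by positivity) gaussianReal_Icc_le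
      (-a) (-b) _).trans_eq ?_
    rw [neg_sub_neg, abs_sub_comm]

lemma pi_setOf_sum_sq_le_eq_lintegral (μ : Measure ℝ) [SigmaFinite μ] (n : ℕ) (lam x : ℝ) :
    Measure.pi (fun _ : Fin (n + 1) => μ)
        {zv | (∑ j, (zv j + if (j : ℕ) = 0 then lam else 0) ^ 2) ≤ x} =
      ∫⁻ w, μ {z | (z + lam) ^ 2 ≤ x - ∑ i, w i ^ 2} ∂Measure.pi (fun _ : Fin n => μ) := by
  set A := {q : ℝ × (Fin n → ℝ) | (q.1 + lam) ^ 2 + ∑ i, q.2 i ^ 2 ≤ x}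
  have hA : MeasurableSet A := measurableSet_le (by fun_prop) measurable_const
  have hpre : {zv : Fin (n + 1) → ℝ | (∑ j, (zv j + if (j : ℕ) = 0 then lam else 0) ^ 2) ≤ x} =
      MeasurableEquiv.piFinSuccAbove (fun _ => ℝ) 0 ⁻¹' A := by
    ext zv
    simp [A, Fin.sum_univ_succ, Fin.tail]
  rw [hpre, (measurePreserving_piFinSuccAbove (fun _ => μ) 0).measure_preimage_equiv,
    Measure.prod_apply_symm hA]
  simp only [le_sub_iff_add_le]
  rfl

lemma ncChiSqCDF_le_add_s8 (k : ℕ) (x a b : ℝ) :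
    ncChiSqCDF k a x ≤ ncChiSqCDF k b x + Real.sqrt (2 / Real.pi) * |a - b| := by
  cases k with
  | zero =>
    have hconst : ncChiSqCDF 0 a x = ncChiSqCDF 0 b x := by simp [ncChiSqCDF]
    rw [hconst]
    exact le_add_of_nonneg_right (by positivity)
  | succ n =>
    unfold ncChiSqCDF
    have hc : 0 ≤ Real.sqrt (2 / Real.pi) * |a - b| := by positivity
    rw [← ENNReal.toReal_ofReal hc, ← ENNReal.toReal_add (measure_ne_top _ _) ENNReal.ofReal_ne_top]
    refine ENNReal.toReal_mono (ENNReal.add_ne_top.2 ⟨measure_ne_top _ _, ENNReal.ofReal_ne_top⟩) ?_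
    rw [pi_setOf_sum_sq_le_eq_lintegral, pi_setOf_sum_sq_le_eq_lintegral]
    calc _ ≤ ∫⁻ w, (gaussianReal 0 1 {z | (z + b) ^ 2 ≤ x - ∑ i, w i ^ 2} +
            ENNReal.ofReal (Real.sqrt (2 / Real.pi) * |a - b|)) ∂Measure.pi fun _ => _ :=
          lintegral_mono fun w => gaussianReal_setOf_sq_add_le a b _
      _ = _ := by
          rw [lintegral_add_right _ measurable_const, lintegral_const, measure_univ, mul_one]

lemma abs_ncChiSqCDF_sub_le_s8 (k : ℕ) (x a b : ℝ) :
    |ncChiSqCDF k a x - ncChiSqCDF k b x| ≤ Real.sqrt (2 / Real.pi) * |a - b| := by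
  have hab := ncChiSqCDF_le_add_s8 k x a b
  have hba := ncChiSqCDF_le_add_s8 k x b a
  rw [abs_sub_comm b a] at hba
  rw [abs_sub_le_iff]
  constructor <;> linarith

lemma stdPhi_nonneg (x : ℝ) : 0 ≤ stdPhi x := ENNReal.toReal_nonneg

lemma stdPhi_le_one (x : ℝ) : stdPhi x ≤ 1 := by
  simpa [stdPhi] using ENNReal.toReal_mono ENNReal.one_ne_top
    (prob_le_one (μ := gaussianReal 0 1) (s := Set.Iic x))

lemma abs_integral_stdPhi_sub_stdPhi_le_one (PiM : Measure ℝ) [IsProbabilityMeasure PiM]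
    (g : ℝ → ℝ) (y : ℝ) : |(∫ u, stdPhi (g u) ∂PiM) - stdPhi y| ≤ 1 := by
  have hint : ‖∫ u, stdPhi (g u) ∂PiM‖ ≤ 1 := by
    refine (norm_integral_le_of_norm_le_const (C := 1) (ae_of_all PiM fun u => ?_)).trans_eq
      (by simp)
    rw [Real.norm_of_nonneg (stdPhi_nonneg _)]
    exact stdPhi_le_one (g u)
  exact abs_sub_le_of_nonneg_of_le (integral_nonneg fun u => stdPhi_nonneg _)
    ((Real.le_norm_self _).trans hint) (stdPhi_nonneg y) (stdPhi_le_one y)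

section DeltaBounds

variable {p : ℕ} (β : Fin p → ℝ) (θ₀ : ℝ) (PiM : Measure ℝ) [IsProbabilityMeasure PiM]

lemma abs_Delta0_le (x : ℝ) : |Delta0 β θ₀ PiM x| ≤ p + 1 := by
  unfold Delta0
  calc _ ≤ |(∫ u, stdPhi ((x + (-1) * u) / θ₀) ∂PiM) - stdPhi (x / θ₀)| +
        ∑ j : Fin p, |(∫ u, stdPhi ((x + β j * u) / θ₀) ∂PiM) - stdPhi (x / θ₀)| :=
        (abs_add_le _ _).trans (add_le_add le_rfl (Finset.abs_sum_le_sum_abs _ _))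
    _ ≤ 1 + ∑ _j : Fin p, (1 : ℝ) := by
        gcongr <;> exact abs_integral_stdPhi_sub_stdPhi_le_one _ _ _
    _ = p + 1 := by simp [add_comm]

lemma abs_DeltaS_le (x : ℝ) : |DeltaS β θ₀ PiM x| ≤ p + 1 := by
  have h₁ := abs_Delta0_le β θ₀ PiM x
  have h₂ := abs_Delta0_le β θ₀ PiM (-x)
  rw [DeltaS, abs_div, abs_two, div_le_iff₀ two_pos]
  linarith [abs_sub (Delta0 β θ₀ PiM x) (Delta0 β θ₀ PiM (-x))]

lemma abs_deltaCell_le (m : ℕ) (xpt : ℕ → ℝ) (j : ℕ) :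
    |deltaCell β θ₀ m xpt PiM j| ≤ 4 * (p + 1) := by
  unfold deltaCell
  split_ifs
  · rw [abs_mul, abs_two]
    linarith [abs_sub (DeltaS β θ₀ PiM (xpt j)) (DeltaS β θ₀ PiM (xpt (j - 1))),
      abs_DeltaS_le β θ₀ PiM (xpt j), abs_DeltaS_le β θ₀ PiM (xpt (j - 1))]
  · rw [abs_mul, abs_two, zero_sub, abs_neg]
    linarith [abs_DeltaS_le β θ₀ PiM (xpt (m - 1))]

end DeltaBounds

lemma bddAbove_deltaNorm {p : ℕ} (β : Fin p → ℝ) (θ₀ : ℝ) (m : ℕ) (xpt : ℕ → ℝ) :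
    BddAbove {r : ℝ | ∃ PiM : Measure ℝ,
      IsProbabilityMeasure PiM ∧ r = deltaNorm β θ₀ m xpt PiM} := by
  refine ⟨Real.sqrt (m * (4 * (p + 1)) ^ 2), ?_⟩
  rintro r ⟨PiM, hPiM, rfl⟩
  rw [deltaNorm]
  gcongr
  calc ∑ j ∈ Finset.Icc 1 m, deltaCell β θ₀ m xpt PiM j ^ 2
      ≤ ∑ _j ∈ Finset.Icc 1 m, (4 * ((p : ℝ) + 1)) ^ 2 := Finset.sum_le_sum fun j _ =>
        sq_le_sq' (abs_le.1 (abs_deltaCell_le β θ₀ PiM m xpt j)).1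
          (abs_le.1 (abs_deltaCell_le β θ₀ PiM m xpt j)).2
    _ = m * (4 * (p + 1)) ^ 2 := by simp

lemma sum_Icc_one_eq_sum_fin {M : Type*} [AddCommMonoid M] (m : ℕ) (f : ℕ → M) :
    ∑ j ∈ Finset.Icc 1 m, f j = ∑ i : Fin m, f (i + 1) := by
  rw [Fin.sum_univ_eq_sum_range (fun i => f (i + 1)), Finset.range_eq_Ico,
    Finset.sum_Ico_add' f, zero_add, Finset.Ico_add_one_right_eq_Icc]

/-- The cells are indexed `1, …, m` in the definitions, while vectors are indexed by `Fin m`. -/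
noncomputable def cellVec (m : ℕ) : (ℕ → ℝ) →ₗ[ℝ] EuclideanSpace ℝ (Fin m) :=
  (WithLp.linearEquiv 2 ℝ (Fin m → ℝ)).symm.toLinearMap ∘ₗ
    LinearMap.funLeft ℝ ℝ fun i : Fin m => (i : ℕ) + 1

@[simp]
lemma cellVec_apply (m : ℕ) (w : ℕ → ℝ) (i : Fin m) : cellVec m w i = w (i + 1) := rfl

lemma norm_cellVec (m : ℕ) (w : ℕ → ℝ) :
    ‖cellVec m w‖ = Real.sqrt (∑ j ∈ Finset.Icc 1 m, w j ^ 2) := by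
  simp [EuclideanSpace.norm_eq, sum_Icc_one_eq_sum_fin]

lemma deltaNorm_eq_norm_cellVec {p : ℕ} (β : Fin p → ℝ) (θ₀ : ℝ) (m : ℕ) (xpt : ℕ → ℝ)
    (PiM : Measure ℝ) : deltaNorm β θ₀ m xpt PiM = ‖cellVec m (deltaCell β θ₀ m xpt PiM)‖ := by
  rw [norm_cellVec, deltaNorm]

section Projection

variable (m : ℕ) (xpt : ℕ → ℝ) (θ₀ : ℝ)

lemma projMat_mulVec_cellVec (w : ℕ → ℝ) (i : Fin m) :
    Matrix.mulVec (projMat m xpt θ₀) (fun l : Fin m => w (l + 1)) i =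
      w (i + 1) / Real.sqrt (pcell m xpt θ₀ (i + 1)) -
        (∑ l ∈ Finset.Icc 1 m, alpha0 m xpt θ₀ l * (w l / Real.sqrt (pcell m xpt θ₀ l))) *
          alpha0 m xpt θ₀ (i + 1) := by
  simp only [Matrix.mulVec, dotProduct, projMat, Matrix.of_apply, sum_Icc_one_eq_sum_fin,
    sub_mul, Finset.sum_sub_distrib, ite_mul, one_mul, zero_mul, Finset.sum_ite_eq,
    Finset.mem_univ, if_true, Finset.sum_mul]
  congr 1
  · rw [div_eq_mul_inv, mul_comm]
  · refine Finset.sum_congr rfl fun l _ => ?_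
    ring

lemma sqrt_lamSq_eq_norm (w : ℕ → ℝ) :
    Real.sqrt (lamSq m xpt θ₀ w) =
      ‖LinearMap.toContinuousLinearMap (Matrix.toEuclideanLin (projMat m xpt θ₀))
        (cellVec m w)‖ := by
  rw [LinearMap.coe_toContinuousLinearMap', Matrix.toLpLin_apply, EuclideanSpace.norm_eq, lamSq,
    sum_Icc_one_eq_sum_fin]
  congr 1
  refine Finset.sum_congr rfl fun i _ => ?_
  rw [PiLp.toLp_apply, Real.norm_eq_abs, sq_abs]
  exact congrArg (· ^ 2) (projMat_mulVec_cellVec m xpt θ₀ w i).symm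

lemma abs_sqrt_lamSq_sub_le (w w' : ℕ → ℝ) :
    |Real.sqrt (lamSq m xpt θ₀ w) - Real.sqrt (lamSq m xpt θ₀ w')| ≤
      projMatNorm m xpt θ₀ * ‖cellVec m (w - w')‖ := by
  rw [sqrt_lamSq_eq_norm, sqrt_lamSq_eq_norm]
  exact ((abs_norm_sub_norm_le _ _).trans_eq (by rw [map_sub, map_sub])).trans
    (ContinuousLinearMap.le_opNorm _ _)

lemma projMatNorm_nonneg : 0 ≤ projMatNorm m xpt θ₀ := norm_nonneg _

lemma abs_ncChiSqCDF_sqrt_lamSq_add_smul_sub_le (k : ℕ) (q : ℝ) (u d : ℕ → ℝ) {γ : ℝ}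
    (hγ : 0 ≤ γ) :
    |ncChiSqCDF k (Real.sqrt (lamSq m xpt θ₀ (u + γ • d))) q -
        ncChiSqCDF k (Real.sqrt (lamSq m xpt θ₀ u)) q| ≤
      γ * Real.sqrt (2 / Real.pi) * projMatNorm m xpt θ₀ * ‖cellVec m d‖ :=
  calc _ ≤ Real.sqrt (2 / Real.pi) *
        |Real.sqrt (lamSq m xpt θ₀ (u + γ • d)) - Real.sqrt (lamSq m xpt θ₀ u)| :=
        abs_ncChiSqCDF_sub_le_s8 _ _ _ _
    _ ≤ Real.sqrt (2 / Real.pi) * (projMatNorm m xpt θ₀ * ‖cellVec m (γ • d)‖) := by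
        gcongr
        simpa using abs_sqrt_lamSq_sub_le m xpt θ₀ (u + γ • d) u
    _ = _ := by
        rw [map_smul, norm_smul, Real.norm_of_nonneg hγ]
        ring

end Projection

theorem symm_pearson_qualitative_robustness_general
    -- AR(p) coefficients and scale
    (p : ℕ) (β : Fin p → ℝ) (θ₀ : ℝ)
    (H : ℝ → ℝ)
    -- the partition `0 = x₀ < x₁ < ⋯ < x_{m−1} < x_m = ∞`
    (m : ℕ) (xpt : ℕ → ℝ)
    -- the asymptotic level and the chi-square quantile `q = χ_{m−2}(1−α)`
    (q : ℝ)
    -- the asymptotic power `W` and the supremum `sup_Π |δ(Π)|`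
    (W : ℝ → ℝ → Measure ℝ → ℝ)
    (hW : ∀ ρ γ PiM, W ρ γ PiM = 1 - ncChiSqCDF (m - 2)
      (Real.sqrt (lamSq m xpt θ₀ (fun j =>
        ρ * (cellProb m xpt H j - pcell m xpt θ₀ j) +
          γ * deltaCell β θ₀ m xpt PiM j))) q)
    (sΔ : ℝ)
    (hsΔ : sΔ = sSup {r : ℝ | ∃ PiM : Measure ℝ,
      IsProbabilityMeasure PiM ∧ r = deltaNorm β θ₀ m xpt PiM})
    -- conclusion
    : BddAbove {r : ℝ | ∃ PiM : Measure ℝ,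
        IsProbabilityMeasure PiM ∧ r = deltaNorm β θ₀ m xpt PiM} ∧
      (∀ γ : ℝ, 0 ≤ γ → ∀ PiM : Measure ℝ, IsProbabilityMeasure PiM → ∀ ρ : ℝ, 0 ≤ ρ →
        |W ρ γ PiM - W ρ 0 PiM| ≤
          γ * Real.sqrt (2 / Real.pi) * projMatNorm m xpt θ₀ * sΔ) ∧
      Tendsto (fun γ : ℝ => γ * Real.sqrt (2 / Real.pi) * projMatNorm m xpt θ₀ * sΔ)
        (nhdsWithin 0 (Set.Ici 0)) (nhds 0) := by
  have hbdd := bddAbove_deltaNorm β θ₀ m xpt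
  refine ⟨hbdd, fun γ hγ PiM hPiM ρ _ => ?_, ?_⟩
  · have hδ : deltaNorm β θ₀ m xpt PiM ≤ sΔ := hsΔ ▸ le_csSup hbdd ⟨PiM, hPiM, rfl⟩
    have hL := projMatNorm_nonneg m xpt θ₀
    rw [hW, hW, sub_sub_sub_cancel_left, abs_sub_comm]
    simp only [zero_mul, add_zero]
    calc _ ≤ γ * Real.sqrt (2 / Real.pi) * projMatNorm m xpt θ₀ * deltaNorm β θ₀ m xpt PiM := by
          rw [deltaNorm_eq_norm_cellVec]
          exact abs_ncChiSqCDF_sqrt_lamSq_add_smul_sub_le m xpt θ₀ (m - 2) q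
            (fun j => ρ * (cellProb m xpt H j - pcell m xpt θ₀ j)) _ hγ
      _ ≤ _ := by gcongr
  · have hcont : Continuous fun γ : ℝ =>
        γ * Real.sqrt (2 / Real.pi) * projMatNorm m xpt θ₀ * sΔ := by fun_prop
    exact tendsto_nhdsWithin_of_tendsto_nhds (hcont.tendsto' 0 0 (by simp))

/-- **Qualitative robustness (2.16).** The limiting power
`W(ρ, γ, Π) = 1 − F_{m−2}(χ_{m−2}(1−α), λ̂²(ρ, γ, Π))` satisfies
`sup_{Π, ρ ≥ 0} |W(ρ, γ, Π) − W(ρ, 0, Π)| ≤ γ √(2/π) ‖(E_m − α₀α₀ᵀ)P₀^{−1/2}‖ · sup_Π |δ(Π)|`,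
where `sup_Π |δ(Π)|` is finite, and the bound tends to `0` as `γ → 0⁺`; hence the limiting
power is uniformly (in `Π` and `ρ`) equicontinuous in `γ` at `γ = 0`. -/
theorem symm_pearson_qualitative_robustness
    -- AR(p) coefficients and scale
    (p : ℕ) (hp : 1 ≤ p) (β : Fin p → ℝ) (θ₀ : ℝ) (hθ₀ : 0 < θ₀)
    -- Conditions (i)–(iii) on `H`
    (H : ℝ → ℝ) (μH : Measure ℝ) (hμH : IsProbabilityMeasure μH)
    (hHcdf : ∀ x, H x = (μH (Set.Iic x)).toReal)
    (hHmean : (∫ u, u ∂μH) = 0)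
    (hHvar : Integrable (fun u => u ^ 2) μH)
    (hHsmooth : ∃ (H' H'' : ℝ → ℝ) (C : ℝ), (∀ x, HasDerivAt H (H' x) x) ∧
      (∀ x, HasDerivAt H' (H'' x) x) ∧ ∀ x, |H'' x| ≤ C)
    (hHsymm : ∀ x, H (-x) = 1 - H x)
    -- the partition `0 = x₀ < x₁ < ⋯ < x_{m−1} < x_m = ∞`
    (m : ℕ) (hm : 2 < m) (xpt : ℕ → ℝ) (hx0 : xpt 0 = 0)
    (hxmono : ∀ j, j + 1 ≤ m - 1 → xpt j < xpt (j + 1))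
    -- the asymptotic level and the chi-square quantile `q = χ_{m−2}(1−α)`
    (α : ℝ) (hα : 0 < α ∧ α < 1)
    (q : ℝ) (hq : ncChiSqCDF (m - 2) 0 q = 1 - α)
    -- the asymptotic power `W` and the supremum `sup_Π |δ(Π)|`
    (W : ℝ → ℝ → Measure ℝ → ℝ)
    (hW : ∀ ρ γ PiM, W ρ γ PiM = 1 - ncChiSqCDF (m - 2)
      (Real.sqrt (lamSq m xpt θ₀ (fun j =>
        ρ * (cellProb m xpt H j - pcell m xpt θ₀ j) +
          γ * deltaCell β θ₀ m xpt PiM j))) q)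
    (sΔ : ℝ)
    (hsΔ : sΔ = sSup {r : ℝ | ∃ PiM : Measure ℝ,
      IsProbabilityMeasure PiM ∧ r = deltaNorm β θ₀ m xpt PiM})
    -- conclusion
    : BddAbove {r : ℝ | ∃ PiM : Measure ℝ,
        IsProbabilityMeasure PiM ∧ r = deltaNorm β θ₀ m xpt PiM} ∧
      (∀ γ : ℝ, 0 ≤ γ → ∀ PiM : Measure ℝ, IsProbabilityMeasure PiM → ∀ ρ : ℝ, 0 ≤ ρ →
        |W ρ γ PiM - W ρ 0 PiM| ≤
          γ * Real.sqrt (2 / Real.pi) * projMatNorm m xpt θ₀ * sΔ) ∧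
      Tendsto (fun γ : ℝ => γ * Real.sqrt (2 / Real.pi) * projMatNorm m xpt θ₀ * sΔ)
        (nhdsWithin 0 (Set.Ici 0)) (nhds 0) :=
  symm_pearson_qualitative_robustness_general p β θ₀ H m xpt q W hW sΔ hsΔ
end
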